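/- Let σ₁₁, σ₁₂, σ₂₁, σ₂₂ be positive real numbers and suppose there exist matrices V, U ∈ ℝ^{2×2} such that the Kronecker product V ⊗ U equals the 4×4 diagonal matrix diag(σ₁₁, σ₁₂, σ₂₁, σ₂₂). Then σ₁₁ · σ₂₂ = σ₁₂ · σ₂₁ (equivalently, σ₁₁/σ₁₂ = σ₂₁/σ₂₂). -/

import Mathlib

open Matrix
open scoped Kronecker

theorem Matrix.kronecker_apply_diag_mul_comm {α m n : Type*} [CommSemigroup α]
    (A : Matrix m m α) (B : Matrix n n α) (i j : m) (k l : n) :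
    (A ⊗ₖ B) (i, k) (i, k) * (A ⊗ₖ B) (j, l) (j, l) =
      (A ⊗ₖ B) (i, l) (i, l) * (A ⊗ₖ B) (j, k) (j, k) := by
  simp only [kronecker_apply]
  ac_rfl

/-- The Kronecker product is indexed by pairs, `(V ⊗ₖ U) (i, k) (j, l) = V i j * U k l`, so the
diagonal is listed in the order `(0,0), (0,1), (1,0), (1,1)`. -/
theorem matrix_normal_diag_constraint_general (σ11 σ12 σ21 σ22 : ℝ)
    (V U : Matrix (Fin 2) (Fin 2) ℝ)
    (h : V ⊗ₖ U = Matrix.diagonal (fun q : Fin 2 × Fin 2 => !![σ11, σ12; σ21, σ22] q.1 q.2)) :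
    σ11 * σ22 = σ12 * σ21 := by
  have key := V.kronecker_apply_diag_mul_comm U 0 1 0 1
  rw [h] at key
  simpa only [diagonal_apply_eq, of_apply, cons_val', cons_val_zero, cons_val_one,
    empty_val', cons_val_fin_one] using key

/-- if `V ⊗ U = diag(σ₁₁, σ₁₂, σ₂₁, σ₂₂)` for some `2 × 2` real matrices
`V`, `U` and positive reals `σ₁₁, σ₁₂, σ₂₁, σ₂₂` (the Kronecker product being indexed by
pairs, with `((i,k),(j,l))`-entry `V i j * U k l`, so the diagonal is listed in the order
`(0,0), (0,1), (1,0), (1,1)`), then `σ₁₁ σ₂₂ = σ₁₂ σ₂₁`. -/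
theorem matrix_normal_diag_constraint (σ11 σ12 σ21 σ22 : ℝ)
    (h11 : 0 < σ11) (h12 : 0 < σ12) (h21 : 0 < σ21) (h22 : 0 < σ22)
    (V U : Matrix (Fin 2) (Fin 2) ℝ)
    (h : V ⊗ₖ U = Matrix.diagonal (fun q : Fin 2 × Fin 2 => !![σ11, σ12; σ21, σ22] q.1 q.2)) :
    σ11 * σ22 = σ12 * σ21 :=
  matrix_normal_diag_constraint_general σ11 σ12 σ21 σ22 V U h
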